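/- Let â = (â_0, ..., â_d) be Chebyshev coefficients of a polynomial a, let M_0[â] = (1/2)(T[â] + H[â] + R[â]) be the Chebyshev multiplication operator, and define M_1[â] := ∇_{S_0}(M_0[â]) S_0^{-1} + M_0[â], where ∇_{S_0}(X) = S_0 X − X S_0. Then M_1[â] = S_0 M_0[â] S_0^{-1}, i.e., M_1[â] equals the multiplication operator for a acting on C^{(1)} coefficient vectors, and it equals the Toeplitz-minus-Hankel matrix (1/2)(T[â] − Ĥ[â]) with Ĥ[â]_{ij} = â_{i+j+2}. -/
import Mathlib


open Finset

/-- Entries of the conversion operator `S_0`. -/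
noncomputable def S0e (i j : ℕ) : ℝ :=
  if i = 0 ∧ j = 0 then 1 else if j = i then 1 / 2 else if j = i + 2 then -(1 / 2) else 0

/-- Entries of the upper-triangular inverse `S_0⁻¹`:
`(S_0⁻¹)_{0j} = 1` if `j` even, `0` if `j` odd; for `i ≥ 1`, `(S_0⁻¹)_{ij} = 2`
if `j ≥ i` and `j − i` even, else `0`. -/
noncomputable def S0invE (i j : ℕ) : ℝ :=
  if i = 0 then (if j % 2 = 0 then 1 else 0)
  else if i ≤ j ∧ (j - i) % 2 = 0 then 2 else 0

/-- Entries of the Chebyshev multiplication operator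
`M_0[â] = (1/2)(T[â] + H[â] + R[â])`, where `T[â]` is symmetric Toeplitz with
first row `(2â_0, â_1, …)`, `H[â]` is Hankel with `H_{ij} = â_{i+j}`, and
`R[â] = −e_1 âᵀ`. -/
noncomputable def M0e (ahat : ℕ → ℝ) (i j : ℕ) : ℝ :=
  (1 / 2) * ((if i = j then 2 * ahat 0 else ahat (((i : ℤ) - (j : ℤ)).natAbs))
    + ahat (i + j) + (if i = 0 then -ahat j else 0))

/-- Entries of `M_0[â] S_0⁻¹` (column `j` of `S_0⁻¹` is supported in rows `≤ j`). -/
noncomputable def M0S0invE (ahat : ℕ → ℝ) (i j : ℕ) : ℝ :=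
  ∑ k ∈ Finset.range (j + 1), M0e ahat i k * S0invE k j

/-- Entries of `S_0 M_0[â] S_0⁻¹` (row `i` of `S_0` is supported in columns `i`, `i+2`). -/
noncomputable def conjE (ahat : ℕ → ℝ) (i j : ℕ) : ℝ :=
  S0e i i * M0S0invE ahat i j + S0e i (i + 2) * M0S0invE ahat (i + 2) j

/-- Entries of the displacement `∇_{S_0}(M_0[â]) = S_0 M_0[â] − M_0[â] S_0`. -/
noncomputable def dispM0E (ahat : ℕ → ℝ) (i k : ℕ) : ℝ :=
  (S0e i i * M0e ahat i k + S0e i (i + 2) * M0e ahat (i + 2) k) -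
    (M0e ahat i k * S0e k k +
      if 2 ≤ k then M0e ahat i (k - 2) * S0e (k - 2) k else 0)

/-- Entries of `M_1[â] := ∇_{S_0}(M_0[â]) S_0⁻¹ + M_0[â]`. -/
noncomputable def M1altE (ahat : ℕ → ℝ) (i j : ℕ) : ℝ :=
  (∑ k ∈ Finset.range (j + 1), dispM0E ahat i k * S0invE k j) + M0e ahat i j

lemma S0e_diag (m : ℕ) : S0e m m = if m = 0 then 1 else 1 / 2 := by
  simp only [S0e]; split_ifs <;> first | rfl | (exfalso; omega) | tauto

lemma S0e_off (m : ℕ) : S0e m (m + 2) = -(1 / 2) := by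
  simp only [S0e]; split_ifs <;> first | rfl | (exfalso; omega) | tauto

lemma S0S0inv (m j : ℕ) :
    S0e m m * S0invE m j + S0e m (m + 2) * S0invE (m + 2) j
      = if m = j then 1 else 0 := by
  rcases eq_or_ne m 0 with rfl | hm
  · have h1 : S0e 0 0 = 1 := by norm_num [S0e]
    have h2 : S0e 0 2 = -(1 / 2) := by norm_num [S0e]
    rw [h1]
    rw [show (0 + 2 : ℕ) = 2 from rfl, h2]
    have h3 : S0invE 0 j = if j % 2 = 0 then 1 else 0 := by simp [S0invE]
    have h4 : S0invE 2 j = if 2 ≤ j ∧ (j - 2) % 2 = 0 then 2 else 0 := by simp [S0invE]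
    rw [h3, h4]
    split_ifs <;> first | (exfalso; omega) | norm_num
  · rw [S0e_diag, S0e_off, if_neg hm]
    have h3 : S0invE m j = if m ≤ j ∧ (j - m) % 2 = 0 then 2 else 0 := by
      simp [S0invE, hm]
    have h4 : S0invE (m + 2) j = if m + 2 ≤ j ∧ (j - (m + 2)) % 2 = 0 then 2 else 0 := by
      simp [S0invE]
    rw [h3, h4]
    split_ifs <;> first | (exfalso; omega) | norm_num

lemma S0invE_stable (k j : ℕ) (hk : k ≤ j) : S0invE k (j + 2) = S0invE k j := by
  simp only [S0invE]; split_ifs <;> first | rfl | (exfalso; omega)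

lemma S0invE_zero (k j : ℕ) (h1 : 1 ≤ k) (h2 : j < k) : S0invE k j = 0 := by
  simp only [S0invE]; split_ifs <;> first | rfl | (exfalso; omega)

lemma sumB (ahat : ℕ → ℝ) (i j : ℕ) :
    ∑ k ∈ Finset.range (j + 1),
      (M0e ahat i k * S0e k k +
        (if 2 ≤ k then M0e ahat i (k - 2) * S0e (k - 2) k else 0)) * S0invE k j
      = M0e ahat i j := by
  have split1 : ∑ k ∈ Finset.range (j + 1),
      (M0e ahat i k * S0e k k +
        (if 2 ≤ k then M0e ahat i (k - 2) * S0e (k - 2) k else 0)) * S0invE k j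
      = (∑ k ∈ Finset.range (j + 1), M0e ahat i k * S0e k k * S0invE k j)
        + ∑ k ∈ Finset.range (j + 1),
            (if 2 ≤ k then M0e ahat i (k - 2) * S0e (k - 2) k else 0) * S0invE k j := by
    rw [← Finset.sum_add_distrib]
    exact Finset.sum_congr rfl (fun k _ => by ring)
  set F : ℕ → ℝ := fun k =>
    (if 2 ≤ k then M0e ahat i (k - 2) * S0e (k - 2) k else 0) * S0invE k j with hF
  have h2 : ∑ k ∈ Finset.range (j + 1), F k
      = ∑ m ∈ Finset.range (j + 1), M0e ahat i m * S0e m (m + 2) * S0invE (m + 2) j := by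
    have z1 : F (j + 1) = 0 := by
      simp [hF, S0invE_zero (j + 1) j (by omega) (by omega)]
    have z2 : F (j + 2) = 0 := by
      simp [hF, S0invE_zero (j + 2) j (by omega) (by omega)]
    have z2' : F (j + 1 + 1) = 0 := by
      simp [hF, S0invE_zero (j + 1 + 1) j (by omega) (by omega)]
    have e1 : ∑ k ∈ Finset.range (j + 1 + 1 + 1), F k = ∑ k ∈ Finset.range (j + 1), F k := by
      rw [Finset.sum_range_succ F (j + 1 + 1), Finset.sum_range_succ F (j + 1), z1, z2']
      ring
    rw [← e1, Finset.sum_range_succ' F (j + 1 + 1), Finset.sum_range_succ' (fun k => F (k + 1)) (j + 1)]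
    have f0 : F 0 = 0 := by simp [hF]
    have f1 : F (0 + 1) = 0 := by simp [hF]
    rw [f0, f1, add_zero, add_zero]
    refine Finset.sum_congr rfl (fun m _ => ?_)
    have h2le : 2 ≤ m + 1 + 1 := by omega
    have hms : m + 1 + 1 - 2 = m := by omega
    simp only [hF, if_pos h2le, hms, show m + 1 + 1 = m + 2 from rfl]
    try ring
  rw [split1, h2, ← Finset.sum_add_distrib]
  have key : ∀ m ∈ Finset.range (j + 1),
      M0e ahat i m * S0e m m * S0invE m j + M0e ahat i m * S0e m (m + 2) * S0invE (m + 2) j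
        = if m = j then M0e ahat i m else 0 := by
    intro m _
    rw [mul_assoc, mul_assoc, ← mul_add, S0S0inv]
    split_ifs <;> simp
  rw [Finset.sum_congr rfl key]
  rw [Finset.sum_ite_eq' (Finset.range (j + 1)) j (fun m => M0e ahat i m)]
  simp

lemma part1 (ahat : ℕ → ℝ) (i j : ℕ) : M1altE ahat i j = conjE ahat i j := by
  have e : ∀ k, dispM0E ahat i k * S0invE k j
      = (S0e i i * (M0e ahat i k * S0invE k j)
          + S0e i (i + 2) * (M0e ahat (i + 2) k * S0invE k j))
        - (M0e ahat i k * S0e k k +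
            (if 2 ≤ k then M0e ahat i (k - 2) * S0e (k - 2) k else 0)) * S0invE k j := by
    intro k; unfold dispM0E; ring
  simp only [M1altE, conjE, M0S0invE]
  simp only [e]
  rw [Finset.sum_sub_distrib, Finset.sum_add_distrib, ← Finset.mul_sum, ← Finset.mul_sum, sumB]
  ring

lemma M0S0inv_rec (ahat : ℕ → ℝ) (i j : ℕ) :
    M0S0invE ahat i (j + 2) = M0S0invE ahat i j + 2 * M0e ahat i (j + 2) := by
  unfold M0S0invE
  rw [show j + 2 + 1 = (j + 1) + 1 + 1 from rfl, Finset.sum_range_succ, Finset.sum_range_succ]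
  have z1 : S0invE (j + 1) (j + 2) = 0 := by
    rw [S0invE, if_neg (by omega), if_neg (by omega)]
  have z2 : S0invE (j + 2) (j + 2) = 2 := by
    rw [S0invE, if_neg (by omega), if_pos (by omega)]
  have congrs : ∑ k ∈ Finset.range (j + 1), M0e ahat i k * S0invE k (j + 2)
      = ∑ k ∈ Finset.range (j + 1), M0e ahat i k * S0invE k j := by
    refine Finset.sum_congr rfl (fun k hk => ?_)
    rw [S0invE_stable k j (by simpa using Nat.lt_succ_iff.mp (Finset.mem_range.mp hk))]
  rw [z1, z2, congrs]
  ring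

lemma conj_rec (ahat : ℕ → ℝ) (i j : ℕ) :
    conjE ahat i (j + 2) = conjE ahat i j
      + 2 * (S0e i i * M0e ahat i (j + 2) + S0e i (i + 2) * M0e ahat (i + 2) (j + 2)) := by
  unfold conjE
  rw [M0S0inv_rec, M0S0inv_rec]
  ring

lemma Tent (ahat : ℕ → ℝ) (i j : ℕ) :
    (if i + 2 = j + 2 then 2 * ahat 0
      else ahat ((((i + 2 : ℕ) : ℤ) - ((j + 2 : ℕ) : ℤ)).natAbs))
    = (if i = j then 2 * ahat 0 else ahat (((i : ℤ) - (j : ℤ)).natAbs)) := by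
  split_ifs <;> first | rfl | (exfalso; omega) | (congr 1; omega)

lemma part2 (ahat : ℕ → ℝ) : ∀ j i : ℕ,
    conjE ahat i j =
      (1 / 2) * ((if i = j then 2 * ahat 0 else ahat (((i : ℤ) - (j : ℤ)).natAbs))
        - ahat (i + j + 2)) := by
  intro j
  induction j using Nat.strong_induction_on with
  | _ j ih =>
    match j with
    | 0 =>
      intro i
      have hs : S0invE 0 0 = 1 := by rw [S0invE, if_pos rfl, if_pos rfl]
      have A0 : ∀ r, M0S0invE ahat r 0 = M0e ahat r 0 := by
        intro r; rw [M0S0invE, Finset.sum_range_one, hs, mul_one]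
      rcases eq_or_ne i 0 with rfl | hi
      · have c1 : S0e 0 0 = 1 := by norm_num [S0e]
        have c2 : S0e 0 (0 + 2) = -(1 / 2) := by norm_num [S0e]
        have B1 : M0e ahat 0 0 = ahat 0 := by
          rw [M0e, if_pos rfl, if_pos rfl, show (0 : ℕ) + 0 = 0 from rfl]; ring
        have B2 : M0e ahat (0 + 2) 0 = ahat 2 := by
          rw [M0e, if_neg (show (0 : ℕ) + 2 ≠ 0 by omega),
            if_neg (show (0 : ℕ) + 2 ≠ 0 by omega),
            show ((((0 : ℕ) + 2 : ℕ) : ℤ) - ((0 : ℕ) : ℤ)).natAbs = 2 from by omega,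
            show (0 : ℕ) + 2 + 0 = 2 from rfl]
          ring
        rw [conjE, A0, A0, c1, c2, B1, B2, if_pos (rfl : (0 : ℕ) = 0),
          show (0 : ℕ) + 0 + 2 = 2 from rfl]
        ring
      · have c1 : S0e i i = 1 / 2 := by rw [S0e_diag, if_neg hi]
        have B1 : M0e ahat i 0 = ahat i := by
          rw [M0e, if_neg hi, if_neg hi,
            show (((i : ℕ) : ℤ) - ((0 : ℕ) : ℤ)).natAbs = i from by omega,
            show i + 0 = i from rfl]
          ring
        have B2 : M0e ahat (i + 2) 0 = ahat (i + 2) := by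
          rw [M0e, if_neg (show i + 2 ≠ 0 by omega), if_neg (show i + 2 ≠ 0 by omega),
            show (((i + 2 : ℕ) : ℤ) - ((0 : ℕ) : ℤ)).natAbs = i + 2 from by omega,
            show i + 2 + 0 = i + 2 from rfl]
          ring
        rw [conjE, A0, A0, c1, S0e_off, B1, B2, if_neg hi,
          show (((i : ℕ) : ℤ) - ((0 : ℕ) : ℤ)).natAbs = i from by omega,
          show i + 0 + 2 = i + 2 from by omega]
        ring
    | 1 =>
      intro i
      have hs0 : S0invE 0 1 = 0 := by rw [S0invE, if_pos rfl, if_neg (by omega)]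
      have hs1 : S0invE 1 1 = 2 := by rw [S0invE, if_neg (by omega), if_pos (by omega)]
      have A1 : ∀ r, M0S0invE ahat r 1 = 2 * M0e ahat r 1 := by
        intro r
        rw [M0S0invE, Finset.sum_range_succ, Finset.sum_range_one, hs0, hs1]
        ring
      rcases eq_or_ne i 0 with rfl | hi
      · have c1 : S0e 0 0 = 1 := by norm_num [S0e]
        have c2 : S0e 0 (0 + 2) = -(1 / 2) := by norm_num [S0e]
        have B1 : M0e ahat 0 1 = (1 / 2) * ahat 1 := by simp [M0e]
        have B2 : M0e ahat (0 + 2) 1 = (1 / 2) * (ahat 1 + ahat 3) := by norm_num [M0e]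
        rw [conjE, A1, A1, c1, c2, B1, B2, if_neg (show (0 : ℕ) ≠ 1 by omega),
          show ((((0 : ℕ)) : ℤ) - ((1 : ℕ) : ℤ)).natAbs = 1 from by omega,
          show (0 : ℕ) + 1 + 2 = 3 from rfl]
        ring
      · rcases eq_or_ne i 1 with rfl | hi1
        · have c1 : S0e 1 1 = 1 / 2 := by rw [S0e_diag, if_neg (by omega)]
          have B1 : M0e ahat 1 1 = (1 / 2) * (2 * ahat 0 + ahat 2) := by
            rw [M0e, if_pos rfl, if_neg (show (1 : ℕ) ≠ 0 by omega),
              show (1 : ℕ) + 1 = 2 from rfl]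
            ring
          have B2 : M0e ahat (1 + 2) 1 = (1 / 2) * (ahat 2 + ahat 4) := by
            rw [M0e, if_neg (show (1 : ℕ) + 2 ≠ 1 by omega),
              if_neg (show (1 : ℕ) + 2 ≠ 0 by omega),
              show ((((1 : ℕ) + 2 : ℕ) : ℤ) - ((1 : ℕ) : ℤ)).natAbs = 2 from by omega,
              show (1 : ℕ) + 2 + 1 = 4 from rfl]
            ring
          rw [conjE, A1, A1, c1, S0e_off, B1, B2, if_pos (rfl : (1 : ℕ) = 1),
            show (1 : ℕ) + 1 + 2 = 4 from rfl]
          ring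
        · have c1 : S0e i i = 1 / 2 := by rw [S0e_diag, if_neg hi]
          have B1 : M0e ahat i 1 = (1 / 2) * (ahat (i - 1) + ahat (i + 1)) := by
            rw [M0e, if_neg hi1, if_neg hi,
              show (((i : ℕ) : ℤ) - ((1 : ℕ) : ℤ)).natAbs = i - 1 from by omega]
            ring
          have B2 : M0e ahat (i + 2) 1 = (1 / 2) * (ahat (i + 1) + ahat (i + 3)) := by
            rw [M0e, if_neg (show i + 2 ≠ 1 by omega), if_neg (show i + 2 ≠ 0 by omega),
              show (((i + 2 : ℕ) : ℤ) - ((1 : ℕ) : ℤ)).natAbs = i + 1 from by omega,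
              show i + 2 + 1 = i + 3 from by omega]
            ring
          rw [conjE, A1, A1, c1, S0e_off, B1, B2, if_neg hi1,
            show (((i : ℕ) : ℤ) - ((1 : ℕ) : ℤ)).natAbs = i - 1 from by omega,
            show i + 1 + 2 = i + 3 from by omega]
          ring
    | (j + 2) =>
      intro i
      rw [conj_rec, ih j (by omega) i, S0e_diag, S0e_off]
      rcases eq_or_ne i 0 with rfl | hi
      · have n1 : (((0 : ℕ) : ℤ) - ((j + 2 : ℕ) : ℤ)).natAbs = j + 2 := by omega
        simp only [M0e, if_pos rfl, Tent ahat 0 j, n1,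
          if_neg (show (0 : ℕ) ≠ j + 2 by omega), if_neg (show (0 : ℕ) + 2 ≠ 0 by omega),
          show (0 : ℕ) + (j + 2) = j + 2 from by omega,
          show (0 : ℕ) + 2 + (j + 2) = 0 + (j + 2) + 2 from by omega,
          show (0 : ℕ) + 0 = 0 from rfl, show (0 : ℕ) + 0 + 2 = 0 + 2 from rfl,
          ite_true, if_true]
        first
          | ring
          | (simp; ring)
          | simp
      · simp only [M0e, Tent ahat i j, if_neg hi, if_neg (show i + 2 ≠ 0 by omega),
          show i + 2 + (j + 2) = i + (j + 2) + 2 from by omega,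
          show i + (j + 2) = i + j + 2 from by omega]
        first
          | ring
          | (simp; ring)
          | simp


/-- `M_1[â] = ∇_{S_0}(M_0[â]) S_0⁻¹ + M_0[â]` equals `S_0 M_0[â] S_0⁻¹`, the
multiplication operator on `C^{(1)}` coefficient vectors, and it equals the
Toeplitz-minus-Hankel matrix `(1/2)(T[â] − Ĥ[â])` with `Ĥ[â]_{ij} = â_{i+j+2}`. -/
theorem M1_eq_conj_eq_toeplitz_minus_hankel (d : ℕ) (ahat : ℕ → ℝ)
    (hd : ∀ j : ℕ, d < j → ahat j = 0) :
    ∀ i j : ℕ,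
      M1altE ahat i j = conjE ahat i j ∧
      conjE ahat i j =
        (1 / 2) * ((if i = j then 2 * ahat 0 else ahat (((i : ℤ) - (j : ℤ)).natAbs))
          - ahat (i + j + 2)) := by
  intro i j
  exact ⟨part1 ahat i j, part2 ahat j i⟩
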